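/- arXiv:1710.02995 — 3 statements merged into one kernel-verified Lean document; each statement's English description precedes it below -/
import Mathlib

section
/- There is a constant C > 0 such that for all real x ≥ 1, |Q(√x)| ≤ C·x^{1/4}, where Q(√x) = x^{−1/2}·(S(√x; 0) − (2^{3/2}π/3)·x); equivalently |S(√x; 0) − (2^{3/2}π/3)·x| ≤ C·x^{3/4}. -/
open Real MeasureTheory intervalIntegral

/-- `r₂(m)`: the number of representations of `m` as a sum of two squares of integers. -/
noncomputable def r2 (m : ℕ) : ℕ :=
  Set.ncard {p : ℤ × ℤ | p.1 ^ 2 + p.2 ^ 2 = (m : ℤ)}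

/-- `S(√x; 0) = √2·x^{1/4}·Σ_{m ∈ ℕ, m ≤ √x} r₂(m)·(√x − m)^{1/2}`. -/
noncomputable def Sx0 (x : ℝ) : ℝ :=
  Real.sqrt 2 * x ^ ((1 : ℝ) / 4) *
    ∑ m ∈ Finset.range (⌊Real.sqrt x⌋₊ + 1),
      (r2 m : ℝ) * (Real.sqrt x - m) ^ ((1 : ℝ) / 2)

/-- `Q(√x) = x^{−1/2}·(S(√x; 0) − (2^{3/2}π/3)·x)`. -/
noncomputable def Q (x : ℝ) : ℝ :=
  x ^ (-(1 : ℝ) / 2) * (Sx0 x - 2 ^ ((3 : ℝ) / 2) * Real.pi / 3 * x)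

lemma key1D (g : ℝ → ℝ) (A : ℕ) (r : ℝ) (hr0 : 0 ≤ r) (hrA : r ≤ A)
    (hcont : Continuous g) (hzero : ∀ t : ℝ, r ≤ t → g t = 0)
    (heven : ∀ t : ℝ, g (-t) = g t) (hanti : AntitoneOn g (Set.Ici 0))
    (hnn : ∀ t : ℝ, 0 ≤ g t) :
    |(∑ b ∈ Finset.Icc (-(A:ℤ)) (A:ℤ), g b) - ∫ t in (-r)..r, g t| ≤ g 0 := by
  -- sum splitting
  have h1 : ∀ B : ℕ, (∑ b ∈ Finset.Icc (-(B:ℤ)) (B:ℤ), g b)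
      = g 0 + 2 * ∑ i ∈ Finset.range B, g ((i:ℝ) + 1) := by
    intro B
    induction B with
    | zero => simp
    | succ n ih =>
      have hset : Finset.Icc (-((n+1:ℕ):ℤ)) ((n+1:ℕ):ℤ)
          = insert (-((n+1:ℕ):ℤ)) (insert ((n+1:ℕ):ℤ) (Finset.Icc (-(n:ℤ)) (n:ℤ))) := by
        ext b; simp only [Finset.mem_Icc, Finset.mem_insert]; omega
      rw [hset, Finset.sum_insert, Finset.sum_insert, ih, Finset.sum_range_succ]
      · have : g (((-((n+1:ℕ):ℤ)) : ℤ) : ℝ) = g (((n:ℝ)+1)) := by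
          push_cast
          rw [show (-((n:ℝ)+1)) = -((n:ℝ)+1) from rfl, heven ((n:ℝ)+1)]
        push_cast at this ⊢
        rw [this]; ring
      · simp only [Finset.mem_Icc]; omega
      · simp only [Finset.mem_insert, Finset.mem_Icc]; omega
  have hanti' : AntitoneOn g (Set.Icc (0:ℝ) (0 + A)) :=
    hanti.mono (fun t ht => ht.1)
  have hlow := hanti'.sum_le_integral
  have hupp := hanti'.integral_le_sum
  simp only [zero_add] at hlow hupp
  have hshift : ∑ i ∈ Finset.range A, g (i:ℝ) ≤ g 0 + ∑ i ∈ Finset.range A, g ((i:ℝ)+1) := by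
    cases A with
    | zero => simp [hnn 0]
    | succ n =>
      rw [Finset.sum_range_succ' (fun i => g (i:ℝ)) n]
      push_cast
      have : ∑ i ∈ Finset.range n, g ((i:ℝ)+1) ≤ ∑ i ∈ Finset.range (n+1), g ((i:ℝ)+1) := by
        rw [Finset.sum_range_succ]
        have := hnn ((n:ℝ)+1); linarith
      linarith
  have hint : ∀ a b : ℝ, IntervalIntegrable g volume a b := fun a b =>
    hcont.intervalIntegrable a b
  have hsplit : (∫ t in (0:ℝ)..r, g t) + (∫ t in r..(A:ℝ), g t) = ∫ t in (0:ℝ)..(A:ℝ), g t :=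
    integral_add_adjacent_intervals (hint 0 r) (hint r A)
  have hz : (∫ t in r..(A:ℝ), g t) = 0 := by
    rw [intervalIntegral.integral_congr (g := fun _ => (0:ℝ)), intervalIntegral.integral_zero]
    intro t ht
    rw [Set.uIcc_of_le hrA] at ht
    exact hzero t ht.1
  have hsym : (∫ t in (-r)..r, g t) = 2 * ∫ t in (0:ℝ)..r, g t := by
    have hneg : (∫ t in (-r)..(0:ℝ), g t) = ∫ t in (0:ℝ)..r, g t := by
      rw [show (∫ t in (0:ℝ)..r, g t) = ∫ t in (0:ℝ)..r, g (-t) from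
        intervalIntegral.integral_congr (fun t _ => (heven t).symm)]
      rw [intervalIntegral.integral_comp_neg]
      simp
    rw [← integral_add_adjacent_intervals (hint (-r) 0) (hint 0 r), hneg]; ring
  -- combine
  have e1 : ∑ i ∈ Finset.range A, g ((i:ℝ)+1) ≤ ∫ t in (0:ℝ)..r, g t := by
    have : ∑ i ∈ Finset.range A, g (((i:ℝ)) + ((1:ℕ):ℝ)) ≤ ∫ t in (0:ℝ)..(A:ℝ), g t := by
      convert hlow using 2 with i
      push_cast; ring
    push_cast at this
    linarith [hz, hsplit]
  have e2 : (∫ t in (0:ℝ)..r, g t) ≤ g 0 + ∑ i ∈ Finset.range A, g ((i:ℝ)+1) := by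
    have := le_trans hupp hshift
    linarith [hz, hsplit]
  rw [h1 A, hsym, abs_le]
  constructor <;> linarith


lemma semicircle_integral (c : ℝ) :
    (∫ t in (-(Real.sqrt c))..(Real.sqrt c), Real.sqrt (c - t^2)) = π * max c 0 / 2 := by
  rcases le_or_gt c 0 with hc | hc
  · have h0 : Real.sqrt c = 0 := Real.sqrt_eq_zero'.mpr hc
    rw [h0, max_eq_right hc]
    simp
  · have hs : 0 < Real.sqrt c := Real.sqrt_pos.mpr hc
    have hss : Real.sqrt c * Real.sqrt c = c := Real.mul_self_sqrt hc.le
    set s := Real.sqrt c with hsdef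
    have key : (∫ t in (-s)..s, Real.sqrt (c - t^2))
        = s • ∫ x in (-1:ℝ)..1, Real.sqrt (c - (s*x)^2) := by
      rw [intervalIntegral.smul_integral_comp_mul_left (fun t => Real.sqrt (c - t^2)) s]
      norm_num
    rw [key]
    have : ∀ x : ℝ, Real.sqrt (c - (s*x)^2) = s * Real.sqrt (1 - x^2) := by
      intro x
      have : c - (s*x)^2 = (s^2) * (1 - x^2) := by rw [sq]; nlinarith
      rw [this, Real.sqrt_mul (sq_nonneg s), Real.sqrt_sq hs.le]
    simp only [this]
    rw [intervalIntegral.integral_const_mul, integral_sqrt_one_sub_sq]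
    rw [max_eq_left hc.le]
    rw [smul_eq_mul, ← hss]
    ring


lemma inner_est (y c : ℝ) (hy : 1 ≤ y) (hc : c ≤ y) (A : ℕ) (hA : y ≤ A) :
    |(∑ b ∈ Finset.Icc (-(A:ℤ)) (A:ℤ), Real.sqrt (c - (b:ℝ)^2)) - π * max c 0 / 2|
      ≤ Real.sqrt c := by
  have h := key1D (fun t => Real.sqrt (c - t^2)) A (Real.sqrt c)
    (Real.sqrt_nonneg c)
    (by
      calc Real.sqrt c ≤ Real.sqrt y := Real.sqrt_le_sqrt hc
      _ ≤ y := by nlinarith [Real.mul_self_sqrt (show (0:ℝ) ≤ y by linarith), Real.sqrt_nonneg y, sq_nonneg (Real.sqrt y - 1)]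
      _ ≤ A := hA)
    (by fun_prop)
    (by
      intro t ht
      rw [Real.sqrt_eq_zero']
      rcases le_or_gt c 0 with h0 | h0
      · nlinarith [sq_nonneg t]
      · nlinarith [Real.sq_sqrt h0.le, Real.sqrt_nonneg c])
    (by intro t; simp only [neg_sq])
    (by
      intro a ha b hb hab
      apply Real.sqrt_le_sqrt
      simp only [Set.mem_Ici] at ha hb
      nlinarith)
    (fun t => Real.sqrt_nonneg _)
  rw [semicircle_integral c] at h
  simpa using h

lemma outer_est (y : ℝ) (hy : 1 ≤ y) (A : ℕ) (hA : y ≤ A) :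
    |(∑ a ∈ Finset.Icc (-(A:ℤ)) (A:ℤ), π * max (y - (a:ℝ)^2) 0 / 2)
      - 2*π/3*(y*Real.sqrt y)| ≤ π * y / 2 := by
  have hy0 : (0:ℝ) ≤ y := by linarith
  set s := Real.sqrt y with hs
  have hss : s * s = y := Real.mul_self_sqrt hy0
  have hs0 : 0 ≤ s := Real.sqrt_nonneg y
  have hint : (∫ t in (-s)..s, π * max (y - t^2) 0 / 2) = 2*π/3*(y*s) := by
    have heq : Set.EqOn (fun t : ℝ => π * max (y - t^2) 0 / 2)
        (fun t : ℝ => π/2 * (y - t^2)) (Set.uIcc (-s) s) := by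
      intro t ht
      rw [Set.uIcc_of_le (by linarith)] at ht
      have : t^2 ≤ y := by nlinarith [ht.1, ht.2]
      simp only
      rw [max_eq_left (by linarith)]
      ring
    rw [intervalIntegral.integral_congr heq, intervalIntegral.integral_const_mul]
    have : (∫ t in (-s)..s, (y - t^2)) = y*(s - (-s)) - (s^3 - (-s)^3)/3 := by
      rw [intervalIntegral.integral_sub (intervalIntegrable_const)
        ((continuous_pow 2).intervalIntegrable _ _), integral_pow, intervalIntegral.integral_const]
      push_cast
      simp only [smul_eq_mul]
      ring
    rw [this]
    have h3 : s^3 = y * s := by rw [pow_succ, sq, hss]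
    rw [show (-s)^3 = -(s^3) by ring, h3]
    ring
  have h := key1D (fun t => π * max (y - t^2) 0 / 2) A s hs0
    (by calc s ≤ y := by nlinarith [sq_nonneg (s-1)]
        _ ≤ A := hA)
    (by fun_prop)
    (by
      intro t ht
      have : y - t^2 ≤ 0 := by nlinarith
      simp [max_eq_right this])
    (by intro t; simp only [neg_sq])
    (by
      intro a ha b hb hab
      simp only [Set.mem_Ici] at ha hb
      have hmx : max (y - b^2) 0 ≤ max (y - a^2) 0 := max_le_max (by nlinarith) le_rfl
      have := mul_le_mul_of_nonneg_left hmx Real.pi_pos.le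
      simp only
      linarith)
    (by
      intro t
      have hpi := Real.pi_pos
      positivity)
  rw [hint] at h
  simpa [max_eq_left hy0] using h


lemma T_est (y : ℝ) (hy : 1 ≤ y) (A : ℕ) (hA : y ≤ A) :
    |(∑ p ∈ (Finset.Icc (-(A:ℤ)) (A:ℤ)) ×ˢ (Finset.Icc (-(A:ℤ)) (A:ℤ)),
        Real.sqrt (y - (p.1:ℝ)^2 - (p.2:ℝ)^2)) - 2*π/3*(y*Real.sqrt y)| ≤ 5*y := by
  rw [Finset.sum_product]
  set I := Finset.Icc (-(A:ℤ)) (A:ℤ) with hI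
  have habs : |(∑ a ∈ I, ∑ b ∈ I, Real.sqrt (y - (a:ℝ)^2 - (b:ℝ)^2))
      - ∑ a ∈ I, π * max (y - (a:ℝ)^2) 0 / 2|
      ≤ ∑ a ∈ I, Real.sqrt (y - (a:ℝ)^2) := by
    rw [← Finset.sum_sub_distrib]
    refine (Finset.abs_sum_le_sum_abs _ _).trans (Finset.sum_le_sum ?_)
    intro a _
    exact inner_est y (y - (a:ℝ)^2) hy (by nlinarith [sq_nonneg ((a:ℝ))]) A hA
  have hErr : ∑ a ∈ I, Real.sqrt (y - (a:ℝ)^2) ≤ π * y / 2 + Real.sqrt y := by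
    have h2 := abs_le.mp (inner_est y y hy le_rfl A hA)
    rw [max_eq_left (by linarith : (0:ℝ) ≤ y)] at h2
    linarith [h2.2]
  have hout := outer_est y hy A hA
  have hsy : Real.sqrt y ≤ y := by
    nlinarith [Real.sqrt_nonneg y, Real.mul_self_sqrt (by linarith : (0:ℝ) ≤ y),
      sq_nonneg (Real.sqrt y - 1)]
  have hpi := Real.pi_le_four
  have htri := abs_sub_le (∑ a ∈ I, ∑ b ∈ I, Real.sqrt (y - (a:ℝ)^2 - (b:ℝ)^2))
    (∑ a ∈ I, π * max (y - (a:ℝ)^2) 0 / 2) (2*π/3*(y*Real.sqrt y))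
  have habs' := habs.trans hErr
  nlinarith [abs_nonneg ((∑ a ∈ I, ∑ b ∈ I, Real.sqrt (y - (a:ℝ)^2 - (b:ℝ)^2))
      - ∑ a ∈ I, π * max (y - (a:ℝ)^2) 0 / 2)]

lemma int_abs_le_sq (a : ℤ) : |a| ≤ a^2 := by
  rcases eq_or_ne a 0 with rfl | h
  · simp
  · calc |a| = |a| * 1 := (mul_one _).symm
    _ ≤ |a| * |a| := mul_le_mul_of_nonneg_left (Int.one_le_abs h) (abs_nonneg a)
    _ = a ^ 2 := by rw [abs_mul_abs_self, sq]

lemma stepA (y : ℝ) (hy : 1 ≤ y) :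
    ∑ m ∈ Finset.range (⌊y⌋₊ + 1), (r2 m : ℝ) * Real.sqrt (y - m)
      = ∑ p ∈ (Finset.Icc (-((⌊y⌋₊+1 : ℕ):ℤ)) ((⌊y⌋₊+1 : ℕ):ℤ))
            ×ˢ (Finset.Icc (-((⌊y⌋₊+1 : ℕ):ℤ)) ((⌊y⌋₊+1 : ℕ):ℤ)),
          Real.sqrt (y - (p.1:ℝ)^2 - (p.2:ℝ)^2) := by
  set N := ⌊y⌋₊ with hN
  set box := (Finset.Icc (-((N+1 : ℕ):ℤ)) ((N+1 : ℕ):ℤ))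
      ×ˢ (Finset.Icc (-((N+1 : ℕ):ℤ)) ((N+1 : ℕ):ℤ)) with hbox
  set s := box.filter (fun p : ℤ × ℤ => p.1^2 + p.2^2 ≤ (N:ℤ)) with hs
  have hyN : y < (N:ℝ) + 1 := Nat.lt_floor_add_one y
  have hNy : (N:ℝ) ≤ y := Nat.floor_le (by linarith)
  -- step 1: r2 m = card of filtered box, for m ≤ N
  have hr2 : ∀ m ∈ Finset.range (N+1),
      (r2 m : ℝ) = ((box.filter (fun p : ℤ × ℤ => p.1^2 + p.2^2 = (m:ℤ))).card : ℝ) := by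
    intro m hm
    rw [Finset.mem_range] at hm
    congr 1
    rw [r2, ← Set.ncard_coe_finset]
    congr 1
    ext p
    simp only [hbox, Finset.coe_filter, Set.mem_setOf_eq, Finset.mem_product, Finset.mem_Icc]
    constructor
    · intro hp
      have h1 : p.1^2 ≤ (m:ℤ) := by nlinarith [sq_nonneg p.2]
      have h2 : p.2^2 ≤ (m:ℤ) := by nlinarith [sq_nonneg p.1]
      have h3 := int_abs_le_sq p.1
      have h4 := int_abs_le_sq p.2
      have hmN : (m:ℤ) ≤ (N:ℤ) := by exact_mod_cast Nat.lt_succ_iff.mp hm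
      rw [abs_le] at h3 h4
      refine ⟨⟨⟨?_, ?_⟩, ?_, ?_⟩, hp⟩ <;> push_cast <;> omega
    · exact fun hp => hp.2
  rw [Finset.sum_congr rfl (fun m hm => by rw [hr2 m hm])]
  -- fiberwise
  have hfiber : ∀ x ∈ s, (x.1^2 + x.2^2).toNat ∈ Finset.range (N+1) := by
    intro p hp
    rw [hs, Finset.mem_filter] at hp
    have h0 : (0:ℤ) ≤ p.1^2 + p.2^2 := by positivity
    rw [Finset.mem_range]
    omega
  have key := Finset.sum_fiberwise_of_maps_to hfiber
    (fun p : ℤ × ℤ => Real.sqrt (y - (p.1:ℝ)^2 - (p.2:ℝ)^2))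
  -- extend s to box
  have hsub : ∑ p ∈ s, Real.sqrt (y - (p.1:ℝ)^2 - (p.2:ℝ)^2)
      = ∑ p ∈ box, Real.sqrt (y - (p.1:ℝ)^2 - (p.2:ℝ)^2) := by
    apply Finset.sum_subset (Finset.filter_subset _ _)
    intro p hpbox hps
    simp only [Finset.mem_filter] at hps
    have hgt : (N:ℤ) < p.1^2 + p.2^2 := by
      by_contra h
      exact hps ⟨hpbox, by omega⟩
    have hle : y - (p.1:ℝ)^2 - (p.2:ℝ)^2 ≤ 0 := by
      have : ((N:ℤ):ℝ) + 1 ≤ ((p.1^2 + p.2^2 : ℤ) : ℝ) := by exact_mod_cast hgt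
      push_cast at this
      linarith
    exact Real.sqrt_eq_zero'.mpr hle
  rw [← hsub, ← key]
  -- inner sums
  apply Finset.sum_congr rfl
  intro m hm
  rw [Finset.mem_range] at hm
  have hset : s.filter (fun p : ℤ × ℤ => (p.1^2 + p.2^2).toNat = m)
      = box.filter (fun p : ℤ × ℤ => p.1^2 + p.2^2 = (m:ℤ)) := by
    rw [hs, Finset.filter_filter]
    apply Finset.filter_congr
    intro p _
    have h0 : (0:ℤ) ≤ p.1^2 + p.2^2 := by positivity
    constructor
    · intro ⟨h1, h2⟩; omega
    · intro h1; omega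
  rw [← hset]
  have hconst : ∀ p ∈ s.filter (fun p : ℤ × ℤ => (p.1^2 + p.2^2).toNat = m),
      Real.sqrt (y - (p.1:ℝ)^2 - (p.2:ℝ)^2) = Real.sqrt (y - m) := by
    intro p hp
    rw [Finset.mem_filter] at hp
    obtain ⟨-, h2⟩ := hp
    have h0 : (0:ℤ) ≤ p.1^2 + p.2^2 := by positivity
    have hq : p.1^2 + p.2^2 = (m:ℤ) := by omega
    have hr : (p.1:ℝ)^2 + (p.2:ℝ)^2 = (m:ℝ) := by exact_mod_cast hq
    rw [show y - (p.1:ℝ)^2 - (p.2:ℝ)^2 = y - ((p.1:ℝ)^2 + (p.2:ℝ)^2) by ring, hr]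
  rw [Finset.sum_congr rfl hconst, Finset.sum_const, nsmul_eq_mul, hset]


/-- There is `C > 0` such that `|Q(√x)| ≤ C·x^{1/4}` for all `x ≥ 1`. -/
theorem Q_bound :
    ∃ C : ℝ, 0 < C ∧ ∀ x : ℝ, 1 ≤ x → |Q x| ≤ C * x ^ ((1 : ℝ) / 4) := by
  refine ⟨8, by norm_num, ?_⟩
  intro x hx
  have hx0 : (0:ℝ) < x := by linarith
  set y := Real.sqrt x with hydef
  have hy : 1 ≤ y := by
    rw [hydef, show (1:ℝ) = Real.sqrt 1 from (Real.sqrt_one).symm]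
    exact Real.sqrt_le_sqrt hx
  set A : ℕ := ⌊y⌋₊ + 1 with hAdef
  have hA : y ≤ (A:ℝ) := by
    have := Nat.lt_floor_add_one y
    push_cast [hAdef]
    linarith
  set T := ∑ p ∈ (Finset.Icc (-(A:ℤ)) (A:ℤ)) ×ˢ (Finset.Icc (-(A:ℤ)) (A:ℤ)),
      Real.sqrt (y - (p.1:ℝ)^2 - (p.2:ℝ)^2) with hT
  have hTe := T_est y hy A hA
  -- rpow facts
  have hy' : y = x ^ ((1:ℝ)/2) := by rw [hydef, Real.sqrt_eq_rpow]
  have hsy' : Real.sqrt y = x ^ ((1:ℝ)/4) := by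
    rw [hy', Real.sqrt_eq_rpow, ← Real.rpow_mul hx0.le]
    norm_num
  have hpow : x ^ ((1:ℝ)/4) * (x ^ ((1:ℝ)/2) * x ^ ((1:ℝ)/4)) = x := by
    rw [← Real.rpow_add hx0, ← Real.rpow_add hx0]
    norm_num
  have h32 : (2:ℝ) ^ ((3:ℝ)/2) = Real.sqrt 2 * 2 := by
    rw [show (3:ℝ)/2 = 1/2 + 1 by norm_num, Real.rpow_add (by norm_num : (0:ℝ) < 2),
      Real.rpow_one, ← Real.sqrt_eq_rpow]
  -- Sx0 rewrite
  have hS : Sx0 x = Real.sqrt 2 * x ^ ((1:ℝ)/4) * T := by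
    rw [Sx0, hT, ← hydef, ← stepA y hy, ← hAdef]
    congr 1
    exact Finset.sum_congr rfl (fun m _ => by rw [← Real.sqrt_eq_rpow])
  have hM : Real.sqrt 2 * x ^ ((1:ℝ)/4) * (2*π/3*(y*Real.sqrt y)) = 2 ^ ((3:ℝ)/2) * π / 3 * x := by
    rw [hsy', hy', h32]
    calc Real.sqrt 2 * x ^ ((1:ℝ)/4) * (2*π/3*(x ^ ((1:ℝ)/2) * x ^ ((1:ℝ)/4)))
        = (Real.sqrt 2 * 2) * π / 3 * (x ^ ((1:ℝ)/4) * (x ^ ((1:ℝ)/2) * x ^ ((1:ℝ)/4))) := by ring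
      _ = Real.sqrt 2 * 2 * π / 3 * x := by rw [hpow]
  have hQ : Q x = (x ^ (-(1:ℝ)/2) * (Real.sqrt 2 * x ^ ((1:ℝ)/4)))
      * (T - 2*π/3*(y*Real.sqrt y)) := by
    rw [Q, hS, ← hM]
    ring
  have h14pos : (0:ℝ) < x ^ ((1:ℝ)/4) := Real.rpow_pos_of_pos hx0 _
  have hneg : (0:ℝ) < x ^ (-(1:ℝ)/2) := Real.rpow_pos_of_pos hx0 _
  have hs2 : (0:ℝ) ≤ Real.sqrt 2 := Real.sqrt_nonneg 2
  have hx12 : x ^ (-(1:ℝ)/2) * x ^ ((1:ℝ)/4) * y = x ^ ((1:ℝ)/4) := by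
    rw [hy', ← Real.rpow_add hx0, ← Real.rpow_add hx0]
    norm_num
  have hb : |Q x| ≤ (x ^ (-(1:ℝ)/2) * (Real.sqrt 2 * x ^ ((1:ℝ)/4))) * (5 * y) := by
    rw [hQ, abs_mul]
    have h1 : |x ^ (-(1:ℝ)/2) * (Real.sqrt 2 * x ^ ((1:ℝ)/4))|
        = x ^ (-(1:ℝ)/2) * (Real.sqrt 2 * x ^ ((1:ℝ)/4)) := abs_of_nonneg (by positivity)
    rw [h1]
    apply mul_le_mul_of_nonneg_left _ (by positivity)
    exact hTe
  have hs2' : Real.sqrt 2 ≤ 1.5 := by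
    nlinarith [Real.sq_sqrt (show (0:ℝ) ≤ 2 by norm_num), Real.sqrt_nonneg 2]
  calc |Q x| ≤ (x ^ (-(1:ℝ)/2) * (Real.sqrt 2 * x ^ ((1:ℝ)/4))) * (5 * y) := hb
    _ = (5 * Real.sqrt 2) * (x ^ (-(1:ℝ)/2) * x ^ ((1:ℝ)/4) * y) := by ring
    _ = (5 * Real.sqrt 2) * x ^ ((1:ℝ)/4) := by rw [hx12]
    _ ≤ 8 * x ^ ((1:ℝ)/4) := by nlinarith
end

section
/- One has S(x) ~ (π²/2)·x as x → ∞; that is, lim_{x→∞} S(x)/x = π²/2. -/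
open Real Filter

/-- `S(x)`: the number of integer points `(a,b,w)` with `(a²+b²)² + w² < x`. -/
noncomputable def S (x : ℝ) : ℕ :=
  Set.ncard {p : ℤ × ℤ × ℤ |
    (((p.1 : ℝ) ^ 2 + (p.2.1 : ℝ) ^ 2) ^ 2 + (p.2.2 : ℝ) ^ 2) < x}

/-!
Cover the region `(a² + b²)² + w² < x` by the unit cubes `[p, p + 1)` at the lattice points `p`
it contains: their union has volume `S(x)`. Moving a point by less than `1` in each coordinate
changes `(a² + b²)² + w²` by `O(x^{3/4})` inside the region, so the union of cubes lies between
the regions of levels `x ∓ 51 x^{3/4}`. Slicing at fixed `w` leaves the disc `a² + b² < √(x - w²)`,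
so the region of level `x` has volume `π ∫ √(x - w²) dw = π² x / 2`; hence
`S(x) = π² x / 2 + O(x^{3/4})`.
-/

open MeasureTheory Set
open scoped ENNReal

lemma volume_sq_add_sq_lt (r : ℝ) :
    volume {p : ℝ × ℝ | p.1 ^ 2 + p.2 ^ 2 < r} = ENNReal.ofReal (π * r) := by
  rcases le_or_gt r 0 with hr | hr
  · have : {p : ℝ × ℝ | p.1 ^ 2 + p.2 ^ 2 < r} = ∅ :=
      eq_empty_of_forall_notMem fun p hp => by nlinarith [sq_nonneg p.1, sq_nonneg p.2, hp.out]
    rw [this, measure_empty, ENNReal.ofReal_of_nonpos (by nlinarith [pi_pos])]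
  have hball : Complex.measurableEquivRealProd ⁻¹' {p : ℝ × ℝ | p.1 ^ 2 + p.2 ^ 2 < r} =
      Metric.ball 0 √r := by
    ext z
    rw [mem_preimage, Complex.measurableEquivRealProd_apply, mem_ofPred_eq, mem_ball_zero_iff,
      lt_sqrt (norm_nonneg z), Complex.sq_norm, Complex.normSq_apply, ← sq, ← sq]
  rw [← Complex.volume_preserving_equiv_real_prod.measure_preimage
      (measurableSet_lt (by fun_prop) measurable_const).nullMeasurableSet, hball,
    Complex.volume_ball, ← ENNReal.ofReal_pow (sqrt_nonneg r), sq_sqrt hr.le,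
    ← ENNReal.ofReal_coe_nnreal, NNReal.coe_real_pi, ← ENNReal.ofReal_mul hr.le, mul_comm]

lemma integral_sqrt_sub_sq {y : ℝ} (hy : 0 < y) :
    ∫ w in -√y..√y, √(y - w ^ 2) = π * y / 2 := by
  have hs : √y ≠ 0 := (sqrt_pos.2 hy).ne'
  have hsub := intervalIntegral.integral_comp_mul_left (fun w => √(y - w ^ 2))
    (a := -1) (b := 1) hs
  have hscale : ∀ t : ℝ, √(y - (√y * t) ^ 2) = √y * √(1 - t ^ 2) := fun t => by
    rw [mul_pow, sq_sqrt hy.le, ← mul_one_sub, sqrt_mul hy.le]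
  simp only [hscale, intervalIntegral.integral_const_mul, integral_sqrt_one_sub_sq, mul_neg,
    mul_one, smul_eq_mul] at hsub
  rw [eq_inv_mul_iff_mul_eq₀ hs] at hsub
  rw [← hsub, ← mul_assoc, mul_self_sqrt hy.le]
  ring

lemma lintegral_sqrt_sub_sq (y : ℝ) :
    ∫⁻ w, ENNReal.ofReal √(y - w ^ 2) = ENNReal.ofReal (π * y / 2) := by
  rcases le_or_gt y 0 with hy | hy
  · have : ∀ w : ℝ, √(y - w ^ 2) = 0 := fun w => sqrt_eq_zero_of_nonpos (by nlinarith [sq_nonneg w])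
    simp [this, ENNReal.ofReal_of_nonpos (by nlinarith [pi_pos] : π * y / 2 ≤ 0)]
  have hsupp : ∀ w ∉ Icc (-√y) √y, ENNReal.ofReal √(y - w ^ 2) = 0 := fun w hw => by
    rw [sqrt_eq_zero_of_nonpos, ENNReal.ofReal_zero]
    rw [mem_Icc, not_and_or, not_le, not_le] at hw
    rcases hw with hw | hw <;> nlinarith [sq_sqrt hy.le, sqrt_nonneg y]
  rw [← setLIntegral_eq_of_support_subset (Function.support_subset_iff'.2 hsupp),
    ← ofReal_integral_eq_lintegral_ofReal, integral_Icc_eq_integral_Ioc,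
    ← intervalIntegral.integral_of_le (by linarith [sqrt_nonneg y]), integral_sqrt_sub_sq hy]
  · exact (by fun_prop : Continuous fun w : ℝ => √(y - w ^ 2)).integrableOn_Icc
  · exact Eventually.of_forall fun w => sqrt_nonneg _

def quarticHeight (q : ℝ × ℝ × ℝ) : ℝ := (q.1 ^ 2 + q.2.1 ^ 2) ^ 2 + q.2.2 ^ 2

lemma volume_quarticHeight_lt (y : ℝ) :
    volume {q | quarticHeight q < y} = ENNReal.ofReal (π ^ 2 / 2 * y) := by
  have hmeas : MeasurableSet {q : (ℝ × ℝ) × ℝ | (q.1.1 ^ 2 + q.1.2 ^ 2) ^ 2 + q.2 ^ 2 < y} :=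
    measurableSet_lt (by fun_prop) measurable_const
  have hslice : ∀ w : ℝ, (fun ab : ℝ × ℝ => (ab, w)) ⁻¹'
      {q : (ℝ × ℝ) × ℝ | (q.1.1 ^ 2 + q.1.2 ^ 2) ^ 2 + q.2 ^ 2 < y} =
      {ab | ab.1 ^ 2 + ab.2 ^ 2 < √(y - w ^ 2)} := fun w => by
    -- also for `y < w²`: both sides are empty, as `√` vanishes on negative numbers
    ext ab
    rw [mem_preimage, mem_ofPred_eq, mem_ofPred_eq, lt_sqrt (by positivity), lt_sub_iff_add_lt]
  rw [← volume_preserving_prodAssoc.measure_preimage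
    (measurableSet_lt (by unfold quarticHeight; fun_prop) measurable_const).nullMeasurableSet]
  change volume {q : (ℝ × ℝ) × ℝ | (q.1.1 ^ 2 + q.1.2 ^ 2) ^ 2 + q.2 ^ 2 < y} = _
  rw [Measure.volume_eq_prod, Measure.prod_apply_symm hmeas]
  simp_rw [hslice, volume_sq_add_sq_lt, ENNReal.ofReal_mul pi_pos.le]
  rw [lintegral_const_mul' _ _ ENNReal.ofReal_ne_top, lintegral_sqrt_sub_sq,
    ← ENNReal.ofReal_mul pi_pos.le]
  ring_nf

lemma Int.abs_sub_floor_le {R : Type*} [Ring R] [LinearOrder R] [IsStrictOrderedRing R]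
    [FloorRing R] (a : R) : |a - ⌊a⌋| ≤ 1 := by
  rw [Int.self_sub_floor, Int.abs_fract]
  exact (Int.fract_lt_one a).le

lemma Int.abs_floor_sub_le {R : Type*} [Ring R] [LinearOrder R] [IsStrictOrderedRing R]
    [FloorRing R] (a : R) : |⌊a⌋ - a| ≤ 1 :=
  abs_sub_comm a ⌊a⌋ ▸ Int.abs_sub_floor_le a

noncomputable def floor₃ (q : ℝ × ℝ × ℝ) : ℤ × ℤ × ℤ := (⌊q.1⌋, ⌊q.2.1⌋, ⌊q.2.2⌋)

lemma measurable_floor₃ : Measurable floor₃ := by unfold floor₃; fun_prop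

lemma preimage_floor₃_singleton (p : ℤ × ℤ × ℤ) :
    floor₃ ⁻¹' {p} = Ico (p.1 : ℝ) (p.1 + 1) ×ˢ Ico (p.2.1 : ℝ) (p.2.1 + 1) ×ˢ
      Ico (p.2.2 : ℝ) (p.2.2 + 1) := by
  ext q
  simp only [floor₃, mem_preimage, mem_singleton_iff, Prod.ext_iff, Int.floor_eq_iff, mem_prod,
    mem_Ico]

lemma map_floor₃_volume : volume.map floor₃ = Measure.count := by
  refine Measure.ext_of_singleton fun p => ?_
  rw [Measure.map_apply measurable_floor₃ (measurableSet_singleton p), Measure.count_singleton,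
    preimage_floor₃_singleton, Measure.volume_eq_prod, Measure.prod_prod, Measure.volume_eq_prod,
    Measure.prod_prod]
  simp

lemma volume_preimage_floor₃ (s : Set (ℤ × ℤ × ℤ)) : volume (floor₃ ⁻¹' s) = s.encard := by
  rw [← Measure.map_apply measurable_floor₃ (.of_discrete), map_floor₃_volume,
    Measure.count_apply .of_discrete]

lemma ncard_eq_volume_preimage_floor₃ {s : Set (ℤ × ℤ × ℤ)} (hs : volume (floor₃ ⁻¹' s) ≠ ∞) :
    (s.ncard : ℝ≥0∞) = volume (floor₃ ⁻¹' s) := by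
  rw [volume_preimage_floor₃] at hs ⊢
  have hfin : s.Finite := Set.encard_ne_top_iff.1 (by simpa using hs)
  rw [← hfin.cast_ncard_eq]
  simp

lemma sq_le_sq_add_of_abs_sub_le {R : Type*} [CommRing R] [LinearOrder R] [IsStrictOrderedRing R]
    {s t v : R} (hts : |t - s| ≤ 1) (hs : |s| ≤ v) :
    t ^ 2 ≤ s ^ 2 + 2 * v + 1 := by
  have hmul : |s * (t - s)| ≤ v := by
    rw [abs_mul]; nlinarith [abs_nonneg s, abs_nonneg (t - s)]
  nlinarith [abs_le.1 hmul, sq_abs (t - s), abs_nonneg (t - s)]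

lemma quarticHeight_le_add {u : ℝ} (hu : 1 ≤ u) {q q' : ℝ × ℝ × ℝ}
    (hq : quarticHeight q < u ^ 4) (h₁ : |q'.1 - q.1| ≤ 1) (h₂ : |q'.2.1 - q.2.1| ≤ 1)
    (h₃ : |q'.2.2 - q.2.2| ≤ 1) :
    quarticHeight q' ≤ quarticHeight q + 51 * u ^ 3 := by
  -- `a'² + b'² ≤ a² + b² + 6u ≤ u² + 6u` and `w'² ≤ w² + 3u³`; `12u³ + 36u² + 3u³ ≤ 51u³`
  obtain ⟨a, b, w⟩ := q
  obtain ⟨a', b', w'⟩ := q'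
  simp only [quarticHeight] at *
  have hm : a ^ 2 + b ^ 2 ≤ u ^ 2 :=
    (pow_le_pow_iff_left₀ (by positivity) (by positivity) two_ne_zero).1
      (by nlinarith [sq_nonneg w])
  have ha : |a| ≤ u := abs_le_of_sq_le_sq (by nlinarith [sq_nonneg b, sq_nonneg u]) (by positivity)
  have hb : |b| ≤ u := abs_le_of_sq_le_sq (by nlinarith [sq_nonneg a, sq_nonneg u]) (by positivity)
  have hw : |w| ≤ u ^ 2 :=
    abs_le_of_sq_le_sq (by nlinarith [sq_nonneg (a ^ 2 + b ^ 2)]) (by positivity)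
  have ha' := sq_le_sq_add_of_abs_sub_le h₁ ha
  have hb' := sq_le_sq_add_of_abs_sub_le h₂ hb
  have hw' := sq_le_sq_add_of_abs_sub_le h₃ hw
  have hm' : a' ^ 2 + b' ^ 2 ≤ a ^ 2 + b ^ 2 + 6 * u := by linarith
  have hu2 : u ^ 2 ≤ u ^ 3 := by nlinarith
  calc (a' ^ 2 + b' ^ 2) ^ 2 + w' ^ 2
      ≤ (a ^ 2 + b ^ 2 + 6 * u) ^ 2 + (w ^ 2 + 2 * u ^ 2 + 1) := by gcongr
    _ ≤ (a ^ 2 + b ^ 2) ^ 2 + w ^ 2 + 51 * u ^ 3 := by nlinarith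

def cast₃ (p : ℤ × ℤ × ℤ) : ℝ × ℝ × ℝ := (p.1, p.2.1, p.2.2)

lemma abs_S_pow_four_sub_le {u : ℝ} (hu : 1 ≤ u) :
    |(S (u ^ 4) : ℝ) - π ^ 2 / 2 * u ^ 4| ≤ π ^ 2 / 2 * (51 * u ^ 3) := by
  set A := floor₃ ⁻¹' {p | quarticHeight (cast₃ p) < u ^ 4}
  have hδ : 0 < 51 * u ^ 3 := by positivity
  have hupper : volume A ≤ ENNReal.ofReal (π ^ 2 / 2 * (u ^ 4 + 51 * u ^ 3)) := by
    rw [← volume_quarticHeight_lt]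
    refine measure_mono fun q (hq : quarticHeight (cast₃ (floor₃ q)) < u ^ 4) => ?_
    have := quarticHeight_le_add hu hq (q' := q) (Int.abs_sub_floor_le _)
      (Int.abs_sub_floor_le _) (Int.abs_sub_floor_le _)
    exact this.trans_lt (by linarith)
  have hlower : ENNReal.ofReal (π ^ 2 / 2 * (u ^ 4 - 51 * u ^ 3)) ≤ volume A := by
    rw [← volume_quarticHeight_lt]
    refine measure_mono fun q (hq : quarticHeight q < u ^ 4 - 51 * u ^ 3) => ?_
    have := quarticHeight_le_add hu (hq.trans (by linarith)) (q' := cast₃ (floor₃ q))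
      (Int.abs_floor_sub_le _) (Int.abs_floor_sub_le _) (Int.abs_floor_sub_le _)
    show quarticHeight (cast₃ (floor₃ q)) < u ^ 4
    linarith
  have hA : volume A ≠ ∞ := ne_top_of_le_ne_top ENNReal.ofReal_ne_top hupper
  have hS : (S (u ^ 4) : ℝ) = (volume A).toReal := by
    rw [← ncard_eq_volume_preimage_floor₃ hA]
    rfl
  rw [abs_le, hS]
  constructor
  · have := (ENNReal.ofReal_le_iff_le_toReal hA).1 hlower
    linarith
  · have := ENNReal.toReal_le_of_le_ofReal (by positivity) hupper
    linarith

lemma abs_S_div_sub_le {x : ℝ} (hx : 1 ≤ x) :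
    |(S x : ℝ) / x - π ^ 2 / 2| ≤ 51 * (π ^ 2 / 2) * (x ^ (4⁻¹ : ℝ))⁻¹ := by
  set u := x ^ (4⁻¹ : ℝ)
  have hu : 1 ≤ u := one_le_rpow hx (by norm_num)
  have hux : u ^ 4 = x := rpow_inv_natCast_pow (by linarith) (by norm_num)
  have h := abs_S_pow_four_sub_le hu
  rw [hux] at h
  have hx0 : 0 < x := by linarith
  rw [show (S x : ℝ) / x - π ^ 2 / 2 = ((S x : ℝ) - π ^ 2 / 2 * x) / x by field_simp, abs_div,
    abs_of_pos hx0, div_le_iff₀ hx0]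
  calc _ ≤ π ^ 2 / 2 * (51 * u ^ 3) := h
    _ = 51 * (π ^ 2 / 2) * u⁻¹ * x := by rw [← hux]; field_simp

/-- `S(x) ~ (π²/2)·x` as `x → ∞`: `lim_{x→∞} S(x)/x = π²/2`. -/
theorem S_asymptotic :
    Tendsto (fun x : ℝ => (S x : ℝ) / x) atTop (nhds (Real.pi ^ 2 / 2)) := by
  have hdecay : Tendsto (fun x : ℝ => 51 * (π ^ 2 / 2) * (x ^ (4⁻¹ : ℝ))⁻¹) atTop (nhds 0) := by
    simpa using ((tendsto_rpow_atTop (by norm_num)).inv_tendsto_atTop).const_mul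
      (51 * (π ^ 2 / 2))
  refine tendsto_iff_norm_sub_tendsto_zero.2
    (squeeze_zero' (.of_forall fun _ => norm_nonneg _) ?_ hdecay)
  filter_upwards [eventually_ge_atTop 1] with x hx using abs_S_div_sub_le hx
end

section
/- There is a constant C > 0 such that for all real y ≥ 1, |Σ_{m ∈ ℕ, m ≤ y} r₂(m)·(y − m)^{1/2} − (2π/3)·y^{3/2}| ≤ C·y. -/
/-!
Expanding `r₂`, the sum is `∑_{a² + b² ≤ y} √(y - a² - b²)`. For fixed `a` the inner sum over `b`
samples the even function `t ↦ √(s - t²)` (`s = y - a²`), which decreases on `[0, ∞)`; it therefore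
differs from its integral `π s / 2` by at most its maximum `√s`. Summing over `a`, these errors add
up to `∑_a √(y - a²) = O(y)`, and the main terms `(π / 2) ∑_a (y - a²)₊` differ from
`(π / 2) ∫ (y - t²)₊ dt = (2π / 3) y^{3/2}` by `O(y)` in the same way.
-/

open Real

open Finset

theorem r2_eq_card_filter {N m : ℕ} (hm : m ≤ N) :
    r2 m = #{p ∈ Icc (-N : ℤ) N ×ˢ Icc (-N : ℤ) N | p.1.natAbs ^ 2 + p.2.natAbs ^ 2 = m} := by
  rw [r2, ← Set.ncard_coe_finset]
  congr 1
  ext ⟨a, b⟩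
  have hsq : ((a.natAbs ^ 2 + b.natAbs ^ 2 : ℕ) : ℤ) = a ^ 2 + b ^ 2 := by push_cast [sq_abs]; rfl
  have ha := Nat.le_self_pow two_ne_zero a.natAbs
  have hb := Nat.le_self_pow two_ne_zero b.natAbs
  simp only [Set.mem_ofPred_eq, coe_filter, mem_product, mem_Icc]
  omega

theorem sum_range_r2_smul {M : Type*} [AddCommMonoid M] (N : ℕ) (g : ℕ → M)
    (hg : ∀ m, N < m → g m = 0) :
    ∑ m ∈ range (N + 1), r2 m • g m =
      ∑ a ∈ Icc (-N : ℤ) N, ∑ b ∈ Icc (-N : ℤ) N, g (a.natAbs ^ 2 + b.natAbs ^ 2) := by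
  rw [← sum_product' (f := fun a b : ℤ ↦ g (a.natAbs ^ 2 + b.natAbs ^ 2)),
    ← sum_filter_of_ne (p := fun p : ℤ × ℤ ↦ p.1.natAbs ^ 2 + p.2.natAbs ^ 2 ∈ range (N + 1)),
    ← sum_fiberwise_eq_sum_filter']
  · refine sum_congr rfl fun m hm ↦ ?_
    rw [r2_eq_card_filter (Nat.lt_succ_iff.1 (mem_range.1 hm)), sum_const]
  · intro p _ hp
    by_contra hout
    exact hp (hg _ (by simpa using hout))

theorem abs_sum_Icc_sub_two_mul_integral_le {f : ℝ → ℝ} {N : ℕ} (heven : f.Even)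
    (hf : AntitoneOn f (Set.Icc 0 (N + 1))) (hN : 0 ≤ f (N + 1)) :
    |∑ b ∈ Icc (-N : ℤ) N, f b - 2 * ∫ x in (0 : ℝ)..N + 1, f x| ≤ f 0 := by
  -- `∫ ≤ ∑_{i ≤ N} f i ≤ f 0 + ∫`, and the symmetric sum counts `f 0` once, not twice.
  have hf' : AntitoneOn f (Set.Icc 0 (0 + (N + 1 : ℕ))) := by simpa using hf
  have lower := hf'.integral_le_sum
  have upper := hf'.sum_le_integral
  have shift : ∑ i ∈ range (N + 1), f i + f (N + 1) = ∑ i ∈ range (N + 1), f (i + 1) + f 0 := by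
    rw [sum_range_succ', sum_range_succ (fun i : ℕ ↦ f (i + 1))]
    push_cast
    ring
  have hsum : ∑ b ∈ Icc (-N : ℤ) N, f b = 2 * ∑ i ∈ range (N + 1), f i - f 0 := by
    rw [sum_Icc_of_even_eq_range (f := fun b : ℤ ↦ f b) (fun b ↦ by simpa using heven b),
      nsmul_eq_mul]
    simp
  simp only [zero_add, Nat.cast_add, Nat.cast_one] at lower upper
  rw [hsum, abs_le]
  constructor <;> linarith

theorem intervalIntegral_eq_of_eqOn_zero {f : ℝ → ℝ} {a b c : ℝ} (hf : Continuous f)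
    (hbc : b ≤ c) (hzero : Set.EqOn f 0 (Set.Icc b c)) :
    ∫ x in a..c, f x = ∫ x in a..b, f x := by
  have htail : ∫ x in b..c, f x = 0 := by
    rw [intervalIntegral.integral_congr (g := fun _ ↦ 0) (by rwa [Set.uIcc_of_le hbc]),
      intervalIntegral.integral_zero]
  rw [← intervalIntegral.integral_add_adjacent_intervals (hf.intervalIntegrable a b)
    (hf.intervalIntegrable b c), htail, add_zero]

theorem integral_sqrt_one_sub_sq_zero_one : ∫ x in (0 : ℝ)..1, √(1 - x ^ 2) = π / 4 := by
  have hcont : Continuous fun x : ℝ ↦ √(1 - x ^ 2) := by fun_prop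
  have hneg : ∫ x in (-1 : ℝ)..0, √(1 - x ^ 2) = ∫ x in (0 : ℝ)..1, √(1 - x ^ 2) := by
    have h := intervalIntegral.integral_comp_neg (a := 0) (b := 1) fun x : ℝ ↦ √(1 - x ^ 2)
    simp only [neg_sq, neg_zero] at h
    exact h.symm
  have := integral_sqrt_one_sub_sq
  rw [← intervalIntegral.integral_add_adjacent_intervals (hcont.intervalIntegrable _ 0)
    (hcont.intervalIntegrable 0 _), hneg] at this
  linarith

theorem integral_sqrt_sq_sub_sq {r : ℝ} (hr : 0 ≤ r) :
    ∫ t in (0 : ℝ)..r, √(r ^ 2 - t ^ 2) = π * r ^ 2 / 4 := by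
  have hscale (x : ℝ) : √(r ^ 2 - (r * x) ^ 2) = r * √(1 - x ^ 2) := by
    rw [show r ^ 2 - (r * x) ^ 2 = r ^ 2 * (1 - x ^ 2) by ring, sqrt_mul (sq_nonneg r),
      sqrt_sq hr]
  have := intervalIntegral.smul_integral_comp_mul_left (fun t ↦ √(r ^ 2 - t ^ 2)) r
    (a := 0) (b := 1)
  simp only [hscale, mul_zero, mul_one, intervalIntegral.integral_const_mul,
    integral_sqrt_one_sub_sq_zero_one, smul_eq_mul] at this
  rw [← this]
  ring

theorem integral_sqrt_sub_sq_s15 {s c : ℝ} (hc : √s ≤ c) :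
    ∫ t in (0 : ℝ)..c, √(s - t ^ 2) = π * max s 0 / 4 := by
  rcases le_or_gt s 0 with hs | hs
  · have hzero (t : ℝ) : √(s - t ^ 2) = 0 := sqrt_eq_zero'.2 (by nlinarith [sq_nonneg t])
    simp [hzero, max_eq_right hs]
  obtain ⟨r, hr, rfl⟩ : ∃ r, 0 ≤ r ∧ s = r ^ 2 := ⟨√s, sqrt_nonneg s, (sq_sqrt hs.le).symm⟩
  rw [sqrt_sq hr] at hc
  rw [intervalIntegral_eq_of_eqOn_zero (by fun_prop) hc, integral_sqrt_sq_sub_sq hr,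
    max_eq_left (sq_nonneg r)]
  intro t ht
  exact sqrt_eq_zero'.2 (by nlinarith [ht.1])

theorem integral_max_sub_sq_zero {s c : ℝ} (hs : 0 ≤ s) (hc : √s ≤ c) :
    ∫ t in (0 : ℝ)..c, max (s - t ^ 2) 0 = 2 / 3 * √s ^ 3 := by
  obtain ⟨r, hr, rfl⟩ : ∃ r, 0 ≤ r ∧ s = r ^ 2 := ⟨√s, sqrt_nonneg s, (sq_sqrt hs).symm⟩
  rw [sqrt_sq hr] at hc ⊢
  rw [intervalIntegral_eq_of_eqOn_zero (by fun_prop) hc]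
  · have hpos :
        Set.EqOn (fun t ↦ max (r ^ 2 - t ^ 2) 0) (fun t ↦ r ^ 2 - t ^ 2) (Set.uIcc 0 r) := by
      intro t ht
      rw [Set.uIcc_of_le hr] at ht
      exact max_eq_left (by nlinarith [ht.1, ht.2])
    rw [intervalIntegral.integral_congr hpos,
      intervalIntegral.integral_sub intervalIntegrable_const
        ((continuous_pow 2).intervalIntegrable _ _),
      intervalIntegral.integral_const, integral_pow, smul_eq_mul]
    ring
  · intro t ht
    exact max_eq_right (by nlinarith [ht.1])

theorem abs_sum_sqrt_sub_sq_sub_le {s : ℝ} {N : ℕ} (hs : √s ≤ N + 1) :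
    |∑ b ∈ Icc (-N : ℤ) N, √(s - b ^ 2) - π * max s 0 / 2| ≤ √s := by
  have hanti : AntitoneOn (fun t : ℝ ↦ √(s - t ^ 2)) (Set.Icc 0 (N + 1)) :=
    fun a ha b _ hab ↦ sqrt_le_sqrt (by nlinarith [ha.1])
  have := abs_sum_Icc_sub_two_mul_integral_le (fun t ↦ by simp) hanti (sqrt_nonneg _)
  rw [integral_sqrt_sub_sq_s15 hs] at this
  convert this using 3
  · ring
  · simp

theorem abs_sum_max_sub_sq_sub_le {s : ℝ} {N : ℕ} (hs : 0 ≤ s) (hsN : √s ≤ N + 1) :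
    |∑ a ∈ Icc (-N : ℤ) N, max (s - a ^ 2) 0 - 4 / 3 * √s ^ 3| ≤ s := by
  have hanti : AntitoneOn (fun t : ℝ ↦ max (s - t ^ 2) 0) (Set.Icc 0 (N + 1)) :=
    fun a ha b _ hab ↦ max_le_max_right 0 (by nlinarith [ha.1])
  have := abs_sum_Icc_sub_two_mul_integral_le (fun t ↦ by simp) hanti (le_max_right _ _)
  rw [integral_max_sub_sq_zero hs hsN] at this
  convert this using 3
  · ring
  · simp [hs]

theorem abs_sum_sqrt_sub_sq_sub_sq_sub_le {s : ℝ} {N : ℕ} (hs : 0 ≤ s) (hsN : √s ≤ N + 1) :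
    |∑ a ∈ Icc (-N : ℤ) N, ∑ b ∈ Icc (-N : ℤ) N, √(s - a ^ 2 - b ^ 2) - 2 * π / 3 * √s ^ 3|
      ≤ π * s + √s := by
  have hinner (a : ℤ) := abs_sum_sqrt_sub_sq_sub_le (N := N) (s := s - a ^ 2)
    ((sqrt_le_sqrt (by nlinarith)).trans hsN)
  have hrows : ∑ a ∈ Icc (-N : ℤ) N, √(s - a ^ 2) ≤ π * s / 2 + √s := by
    have := abs_sum_sqrt_sub_sq_sub_le hsN
    rw [max_eq_left hs] at this
    linarith [(abs_le.1 this).2]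
  have houter := abs_sum_max_sub_sq_sub_le hs hsN
  calc _ = |∑ a ∈ Icc (-N : ℤ) N, (∑ b ∈ Icc (-N : ℤ) N, √(s - a ^ 2 - b ^ 2)
          - π * max (s - a ^ 2) 0 / 2)
        + π / 2 * (∑ a ∈ Icc (-N : ℤ) N, max (s - a ^ 2) 0 - 4 / 3 * √s ^ 3)| := by
        rw [sum_sub_distrib, ← sum_div, ← mul_sum]
        ring_nf
    _ ≤ ∑ a ∈ Icc (-N : ℤ) N, |∑ b ∈ Icc (-N : ℤ) N, √(s - a ^ 2 - b ^ 2)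
          - π * max (s - a ^ 2) 0 / 2|
        + π / 2 * |∑ a ∈ Icc (-N : ℤ) N, max (s - a ^ 2) 0 - 4 / 3 * √s ^ 3| := by
        grw [abs_add_le, abs_sum_le_sum_abs, abs_mul, abs_of_pos (by positivity : 0 < π / 2)]
    _ ≤ ∑ a ∈ Icc (-N : ℤ) N, √(s - a ^ 2) + π / 2 * s := by
        gcongr with a
        exact hinner a
    _ ≤ π * s + √s := by linarith

/-- There is `C > 0` such that for all `y ≥ 1`,
`|Σ_{m ∈ ℕ, m ≤ y} r₂(m)·(y − m)^{1/2} − (2π/3)·y^{3/2}| ≤ C·y`. -/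
theorem riesz_mean_half :
    ∃ C : ℝ, 0 < C ∧ ∀ y : ℝ, 1 ≤ y →
      |(∑ m ∈ Finset.range (⌊y⌋₊ + 1), (r2 m : ℝ) * (y - m) ^ ((1 : ℝ) / 2)) -
        2 * Real.pi / 3 * y ^ ((3 : ℝ) / 2)| ≤ C * y := by
  refine ⟨π + 1, by positivity, fun y hy ↦ ?_⟩
  have hsqrt : √y ≤ y := sqrt_le_self_iff.2 (Or.inr hy)
  have hN : √y ≤ ⌊y⌋₊ + 1 := hsqrt.trans (Nat.lt_floor_add_one y).le
  have hcount : ∑ m ∈ range (⌊y⌋₊ + 1), (r2 m : ℝ) * (y - m) ^ ((1 : ℝ) / 2)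
      = ∑ a ∈ Icc (-⌊y⌋₊ : ℤ) ⌊y⌋₊, ∑ b ∈ Icc (-⌊y⌋₊ : ℤ) ⌊y⌋₊, √(y - a ^ 2 - b ^ 2) := by
    simp_rw [← sqrt_eq_rpow, ← nsmul_eq_mul]
    rw [sum_range_r2_smul _ (fun m ↦ √(y - m))]
    · push_cast [Nat.cast_natAbs, sq_abs, sub_sub]
      rfl
    · intro m hm
      exact sqrt_eq_zero'.2 (by linarith [(Nat.floor_lt (by linarith)).1 hm])
  have hpow : y ^ ((3 : ℝ) / 2) = √y ^ 3 := by
    rw [sqrt_eq_rpow, ← rpow_natCast, ← rpow_mul (by linarith)]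
    norm_num
  rw [hcount, hpow]
  calc _ ≤ π * y + √y := abs_sum_sqrt_sub_sq_sub_sq_sub_le (by linarith) hN
    _ ≤ (π + 1) * y := by linarith
end
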